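/- arXiv:1509.05104 — 9 statements merged into one kernel-verified Lean document; each statement's English description precedes it below -/
import Mathlib

section
/- The cycle pairing ⟨p, p*⟩ = b·b* − 2ac* − 2a*c on the space F of functions p(X) = a(X·X) + b·X + c over an anisotropic quadratic space E is a non-degenerate symmetric bilinear form on F, and F with this form is isometric to the orthogonal sum of E and a hyperbolic (Artinian) plane. -/
/-- The cycle pairing on `F = k × E × k` (a cycle `a(X·X)+b·X+c` is the triple `(a,b,c)`)
is a non-degenerate symmetric bilinear form, and `F` is isometric to the orthogonal sum
of `E` and a hyperbolic (Artinian) plane. -/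
theorem stmt_0 {k : Type*} [Field k] (hchar : (2 : k) ≠ 0)
    {E : Type*} [AddCommGroup E] [Module k E]
    (B : LinearMap.BilinForm k E) (hB : B.IsSymm)
    (haniso : ∀ x : E, B x x = 0 → x = 0)
    (cyc : (k × E × k) → (k × E × k) → k)
    (hcyc : ∀ p q : k × E × k,
      cyc p q = B p.2.1 q.2.1 - 2 * p.1 * q.2.2 - 2 * q.1 * p.2.2) :
    (∀ p q, cyc p q = cyc q p) ∧
    (∀ p q r, cyc (p + q) r = cyc p r + cyc q r) ∧
    (∀ (t : k) p q, cyc (t • p) q = t * cyc p q) ∧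
    (∀ p, (∀ q, cyc p q = 0) → p = 0) ∧
    (∃ f : (k × E × k) ≃ₗ[k] E × k × k, ∀ u v,
      cyc u v = B (f u).1 (f v).1 +
        ((f u).2.1 * (f v).2.2 + (f u).2.2 * (f v).2.1)) := by
  refine ⟨?_, ?_, ?_, ?_, ?_⟩
  · intro p q
    rw [hcyc, hcyc]
    rw [show (B p.2.1) q.2.1 = (B q.2.1) p.2.1 from (hB.eq q.2.1 p.2.1).symm.trans rfl]
    ring
  · intro p q r
    simp only [hcyc, Prod.fst_add, Prod.snd_add, map_add, LinearMap.add_apply]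
    ring
  · intro t p q
    simp only [hcyc, Prod.smul_fst, Prod.smul_snd, smul_eq_mul, map_smul,
      LinearMap.smul_apply, smul_eq_mul]
    ring
  · intro p hp
    have h1 := hp (1, 0, 0)
    have h2 := hp (0, 0, 1)
    have h3 := hp (0, p.2.1, 0)
    rw [hcyc] at h1 h2 h3
    simp only [map_zero, LinearMap.zero_apply] at h1 h2 h3
    have hc : p.2.2 = 0 := by
      have h : (2 : k) * p.2.2 = 0 := by linear_combination -h1
      exact (mul_eq_zero.mp h).resolve_left hchar
    have ha : p.1 = 0 := by
      have h : (2 : k) * p.1 = 0 := by linear_combination -h2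
      exact (mul_eq_zero.mp h).resolve_left hchar
    have hb : p.2.1 = 0 := by
      apply haniso
      linear_combination h3
    have : p = (p.1, p.2.1, p.2.2) := rfl
    rw [this, ha, hb, hc]
    rfl
  · refine ⟨⟨⟨⟨fun p => (p.2.1, p.1, -2 * p.2.2), ?_⟩, ?_⟩,
      fun q => (q.2.1, q.1, -q.2.2 / 2), ?_, ?_⟩, ?_⟩
    · intro p q
      refine Prod.ext rfl (Prod.ext rfl ?_)
      show -2 * (p.2.2 + q.2.2) = -2 * p.2.2 + -2 * q.2.2
      ring
    · intro t p
      refine Prod.ext rfl (Prod.ext rfl ?_)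
      show -2 * (t * p.2.2) = t * (-2 * p.2.2)
      ring
    · intro p
      refine Prod.ext rfl (Prod.ext rfl ?_)
      show -(-2 * p.2.2) / 2 = p.2.2
      field_simp
    · intro q
      refine Prod.ext rfl (Prod.ext rfl ?_)
      show -2 * (-q.2.2 / 2) = q.2.2
      field_simp
    · intro u v
      simp only [hcyc, LinearEquiv.coe_mk, LinearMap.coe_mk, AddHom.coe_mk]
      ring
end

section
/- A circle p = a(X·X) + b·X + c (with a ≠ 0) is orthogonal under the cycle pairing to a linear cycle q = e·X + f if and only if q vanishes at the center −b/(2a) of p, i.e., ⟨p, q⟩ = −2a·q(−b/2a). -/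
theorem LinearMap.BilinForm.IsSymm.apply_sub_mul_eq_neg_mul_apply_neg_inv_smul_add
    {k E : Type*} [Field k] [AddCommGroup E] [Module k E] {B : LinearMap.BilinForm k E}
    (hB : B.IsSymm) {t : k} (ht : t ≠ 0) (b e : E) (f : k) :
    B b e - t * f = -t * (B e (-(t⁻¹ • b)) + f) := by
  rw [map_neg, map_smul, smul_eq_mul, hB.eq b e]
  field_simp
  ring

theorem stmt_2_general {k : Type*} [Field k] (hchar : (2 : k) ≠ 0)
    {E : Type*} [AddCommGroup E] [Module k E]
    (B : LinearMap.BilinForm k E) (hB : B.IsSymm)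
    (cyc : (k × E × k) → (k × E × k) → k)
    (hcyc : ∀ p q : k × E × k,
      cyc p q = B p.2.1 q.2.1 - 2 * p.1 * q.2.2 - 2 * q.1 * p.2.2)
    (a c f : k) (b e : E) (ha : a ≠ 0) :
    cyc (a, b, c) (0, e, f) = -(2 * a) * (B e (-((2 * a)⁻¹ • b)) + f) ∧
    (cyc (a, b, c) (0, e, f) = 0 ↔ B e (-((2 * a)⁻¹ • b)) + f = 0) := by
  have h2a : 2 * a ≠ 0 := mul_ne_zero hchar ha
  have hpair : cyc (a, b, c) (0, e, f) = -(2 * a) * (B e (-((2 * a)⁻¹ • b)) + f) := by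
    rw [hcyc, mul_zero, zero_mul, sub_zero]
    exact hB.apply_sub_mul_eq_neg_mul_apply_neg_inv_smul_add h2a b e f
  refine ⟨hpair, ?_⟩
  rw [hpair, mul_eq_zero, or_iff_right (neg_ne_zero.mpr h2a)]

/-- A circle `p = a(X·X)+b·X+c` (with `a ≠ 0`) is cycle-orthogonal to a linear cycle
`q = e·X+f` iff `q` vanishes at the center `-b/(2a)` of `p`; indeed
`⟨p,q⟩ = -2a·q(-b/2a)`. -/
theorem stmt_2 {k : Type*} [Field k] (hchar : (2 : k) ≠ 0)
    {E : Type*} [AddCommGroup E] [Module k E]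
    (B : LinearMap.BilinForm k E) (hB : B.IsSymm)
    (haniso : ∀ x : E, B x x = 0 → x = 0)
    (cyc : (k × E × k) → (k × E × k) → k)
    (hcyc : ∀ p q : k × E × k,
      cyc p q = B p.2.1 q.2.1 - 2 * p.1 * q.2.2 - 2 * q.1 * p.2.2)
    (a c f : k) (b e : E) (ha : a ≠ 0) :
    cyc (a, b, c) (0, e, f) = -(2 * a) * (B e (-((2 * a)⁻¹ • b)) + f) ∧
    (cyc (a, b, c) (0, e, f) = 0 ↔ B e (-((2 * a)⁻¹ • b)) + f = 0) :=
  stmt_2_general hchar B hB cyc hcyc a c f b e ha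
end

section
/- For circles p = a(X·X) + b·X + c and q = d(X·X) + e·X + f with a, d ≠ 0, writing s = (b·b − 4ac)/(4a²), t = (e·e − 4df)/(4d²), and w = (b/2a − e/2d)·(b/2a − e/2d), the cycle pairing satisfies ⟨p, q⟩ = 2ad(s + t − w). -/
namespace LinearMap.BilinForm

variable {R M : Type*} [CommRing R] [AddCommGroup M] [Module R M] {B : LinearMap.BilinForm R M}

theorem IsSymm.apply_smul_sub_smul_self (hB : B.IsSymm) (α β : R) (x y : M) :
    B (α • x - β • y) (α • x - β • y) = α ^ 2 * B x x - 2 * α * β * B x y + β ^ 2 * B y y := by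
  have hyx : B y x = B x y := hB.eq y x
  simp only [map_sub, map_smul, LinearMap.sub_apply, LinearMap.smul_apply, smul_eq_mul, hyx]
  ring

end LinearMap.BilinForm

theorem stmt_3_general {k : Type*} [Field k] (hchar : (2 : k) ≠ 0)
    {E : Type*} [AddCommGroup E] [Module k E]
    (B : LinearMap.BilinForm k E) (hB : B.IsSymm)
    (cyc : (k × E × k) → (k × E × k) → k)
    (hcyc : ∀ p q : k × E × k,
      cyc p q = B p.2.1 q.2.1 - 2 * p.1 * q.2.2 - 2 * q.1 * p.2.2)
    (a c d f : k) (b e : E) (ha : a ≠ 0) (hd : d ≠ 0)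
    (s t w : k)
    (hs : s = (B b b - 4 * a * c) / (4 * a ^ 2))
    (ht : t = (B e e - 4 * d * f) / (4 * d ^ 2))
    (hw : w = B ((2 * a)⁻¹ • b - (2 * d)⁻¹ • e) ((2 * a)⁻¹ • b - (2 * d)⁻¹ • e)) :
    cyc (a, b, c) (d, e, f) = 2 * a * d * (s + t - w) := by
  have h4 : (4 : k) ≠ 0 := by
    rw [show (4 : k) = 2 * 2 by norm_num]
    exact mul_ne_zero hchar hchar
  rw [hcyc, hs, ht, hw, hB.apply_smul_sub_smul_self]
  field_simp
  ring

/-- For circles `p = a(X·X)+b·X+c` and `q = d(X·X)+e·X+f` with `a, d ≠ 0`, writing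
`s`, `t` for their sizes and `w` for the quadratic form evaluated at the difference of
centers, we have `⟨p,q⟩ = 2ad(s+t−w)`. -/
theorem stmt_3 {k : Type*} [Field k] (hchar : (2 : k) ≠ 0)
    {E : Type*} [AddCommGroup E] [Module k E]
    (B : LinearMap.BilinForm k E) (hB : B.IsSymm)
    (haniso : ∀ x : E, B x x = 0 → x = 0)
    (cyc : (k × E × k) → (k × E × k) → k)
    (hcyc : ∀ p q : k × E × k,
      cyc p q = B p.2.1 q.2.1 - 2 * p.1 * q.2.2 - 2 * q.1 * p.2.2)
    (a c d f : k) (b e : E) (ha : a ≠ 0) (hd : d ≠ 0)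
    (s t w : k)
    (hs : s = (B b b - 4 * a * c) / (4 * a ^ 2))
    (ht : t = (B e e - 4 * d * f) / (4 * d ^ 2))
    (hw : w = B ((2 * a)⁻¹ • b - (2 * d)⁻¹ • e) ((2 * a)⁻¹ • b - (2 * d)⁻¹ • e)) :
    cyc (a, b, c) (d, e, f) = 2 * a * d * (s + t - w) :=
  stmt_3_general hchar B hB cyc hcyc a c d f b e ha hd s t w hs ht hw
end

section
/- The only isotropic cycles in F are the nonzero constant functions and the zero circles, i.e., nonzero scalar multiples of functions of the form (X − m)·(X − m) for m ∈ E. -/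
/-!
A cycle `(a, b, c)` is isotropic iff `B b b = 4 a c`. If `a = 0` this forces `B b b = 0`, hence
`b = 0` by anisotropy, leaving a nonzero constant. If `a ≠ 0`, completing the square with the
centre `m = -(2a)⁻¹ • b` writes the cycle as `a • (X − m)·(X − m)`.
-/

section ZeroCircle

variable {k E : Type*} [Field k] [AddCommGroup E] [Module k E] (B : LinearMap.BilinForm k E)

/-- The triple `(a, b, c)` stands for the cycle `a (X·X) + b·X + c`. -/
def IsIsotropicCycle (p : k × E × k) : Prop := B p.2.1 p.2.1 = 4 * p.1 * p.2.2

/-- `(X − m)·(X − m) = X·X − 2 m·X + m·m`. -/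
def zeroCircle (m : E) : k × E × k := ((1 : k), -((2 : k) • m), B m m)

theorem isIsotropicCycle_smul_zeroCircle (u : k) (m : E) :
    IsIsotropicCycle B (u • zeroCircle B m) := by
  simp only [IsIsotropicCycle, zeroCircle, Prod.smul_mk, smul_eq_mul, smul_neg, smul_smul,
    map_neg, map_smul, LinearMap.neg_apply, LinearMap.smul_apply]
  ring

theorem eq_smul_zeroCircle_of_isIsotropicCycle (hchar : (2 : k) ≠ 0) {a c : k} {b : E}
    (ha : a ≠ 0) (h : IsIsotropicCycle B (a, b, c)) :
    (a, b, c) = a • zeroCircle B (-(2 * a)⁻¹ • b) := by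
  have h2a : 2 * a ≠ 0 := mul_ne_zero hchar ha
  simp only [zeroCircle, Prod.smul_mk, smul_eq_mul, smul_neg, smul_smul, map_smul,
    LinearMap.smul_apply, mul_one, Prod.mk.injEq, true_and]
  refine ⟨?_, ?_⟩
  · rw [← neg_smul, show -(a * (2 * -(2 * a)⁻¹)) = 1 by field_simp, one_smul]
  · rw [show B b b = 4 * a * c from h]
    field_simp
    ring

end ZeroCircle

theorem stmt_5_general {k : Type*} [Field k] (hchar : (2 : k) ≠ 0)
    {E : Type*} [AddCommGroup E] [Module k E]
    (B : LinearMap.BilinForm k E)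
    (haniso : ∀ x : E, B x x = 0 → x = 0)
    (cyc : (k × E × k) → (k × E × k) → k)
    (hcyc : ∀ p q : k × E × k,
      cyc p q = B p.2.1 q.2.1 - 2 * p.1 * q.2.2 - 2 * q.1 * p.2.2)
    (p : k × E × k) (hp : p ≠ 0) :
    cyc p p = 0 ↔
      ((p.1 = 0 ∧ p.2.1 = 0 ∧ p.2.2 ≠ 0) ∨
        ∃ (u : k) (m : E), u ≠ 0 ∧ p = u • ((1 : k), -((2 : k) • m), B m m)) := by
  have hiso : cyc p p = 0 ↔ IsIsotropicCycle B p := by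
    rw [hcyc, IsIsotropicCycle]
    constructor <;> intro h <;> linear_combination h
  rw [hiso]
  constructor
  · obtain ⟨a, b, c⟩ := p
    intro h
    by_cases ha : a = 0
    · subst ha
      obtain rfl : b = 0 := haniso b (by simpa [IsIsotropicCycle] using h)
      exact Or.inl ⟨rfl, rfl, fun hc => hp (by simp_all)⟩
    · exact Or.inr ⟨a, _, ha, eq_smul_zeroCircle_of_isIsotropicCycle B hchar ha h⟩
  · rintro (⟨h1, h2, -⟩ | ⟨u, m, -, rfl⟩)
    · simp [IsIsotropicCycle, h1, h2]
    · exact isIsotropicCycle_smul_zeroCircle B u m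

/-- The only isotropic cycles are the nonzero constant functions and the nonzero scalar
multiples of zero circles `(X − m)·(X − m)`. -/
theorem stmt_5 {k : Type*} [Field k] (hchar : (2 : k) ≠ 0)
    {E : Type*} [AddCommGroup E] [Module k E]
    (B : LinearMap.BilinForm k E) (hB : B.IsSymm)
    (haniso : ∀ x : E, B x x = 0 → x = 0)
    (cyc : (k × E × k) → (k × E × k) → k)
    (hcyc : ∀ p q : k × E × k,
      cyc p q = B p.2.1 q.2.1 - 2 * p.1 * q.2.2 - 2 * q.1 * p.2.2)
    (p : k × E × k) (hp : p ≠ 0) :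
    cyc p p = 0 ↔
      ((p.1 = 0 ∧ p.2.1 = 0 ∧ p.2.2 ≠ 0) ∨
        ∃ (u : k) (m : E), u ≠ 0 ∧ p = u • ((1 : k), -((2 : k) • m), B m m)) :=
  stmt_5_general hchar B haniso cyc hcyc p hp
end

section
/- The zero set Z(p) ⊆ E of a circle p (a ≠ 0) consists of exactly one point if and only if p is a zero circle (has size 0), in which case the unique zero is the center of p. -/
/-! Completing the square writes `p(x) = a ((x - m)·(x - m) - s)` with `m` the center and `s` the
size, so `Z(p)` is the sphere of "squared radius" `s` around `m`. That sphere is symmetric under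
`x ↦ 2m - x`, so a unique zero must be `m` itself, forcing `s = 0`; conversely, for `s = 0`
anisotropy leaves `m` as the only zero. -/

namespace LinearMap.BilinForm

variable {k E : Type*} [Field k] [AddCommGroup E] [Module k E] (B : LinearMap.BilinForm k E)

def circle (a : k) (b : E) (c : k) (x : E) : k := a * B x x + B b x + c

def circleSize (a : k) (b : E) (c : k) : k := (B b b - 4 * a * c) / (4 * a ^ 2)

def circleCenter (a : k) (b : E) : E := -((2 * a)⁻¹ • b)

variable {B}

theorem circle_eq_mul_sub_circleSize (hB : B.IsSymm) (hchar : (2 : k) ≠ 0) {a : k} (ha : a ≠ 0)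
    (b : E) (c : k) (x : E) :
    B.circle a b c x =
      a * (B (x - circleCenter a b) (x - circleCenter a b) - B.circleSize a b c) := by
  set u : k := (2 * a)⁻¹
  have hu : 2 * a * u = 1 := mul_inv_cancel₀ (mul_ne_zero hchar ha)
  have h4 : (4 : k) * a ^ 2 ≠ 0 := by
    rw [show (4 : k) * a ^ 2 = (2 * a) ^ 2 by ring]
    exact pow_ne_zero 2 (mul_ne_zero hchar ha)
  have hsize : B.circleSize a b c = u ^ 2 * (B b b - 4 * a * c) := by
    rw [circleSize, div_eq_iff h4]
    linear_combination (-(B b b - 4 * a * c) * (1 + 2 * a * u)) * hu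
  rw [hsize, circle, circleCenter, sub_neg_eq_add]
  simp only [map_add, map_smul, LinearMap.add_apply, LinearMap.smul_apply, smul_eq_mul]
  rw [hB.eq b x]
  linear_combination (-(B x) b - c * (1 + 2 * a * u)) * hu

theorem circle_eq_zero_iff (hB : B.IsSymm) (hchar : (2 : k) ≠ 0) {a : k} (ha : a ≠ 0)
    (b : E) (c : k) (x : E) :
    B.circle a b c x = 0 ↔
      B (x - circleCenter a b) (x - circleCenter a b) = B.circleSize a b c := by
  rw [circle_eq_mul_sub_circleSize hB hchar ha, mul_eq_zero, sub_eq_zero, or_iff_right ha]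

theorem circle_two_smul_circleCenter_sub (hB : B.IsSymm) (hchar : (2 : k) ≠ 0) {a : k}
    (ha : a ≠ 0) (b : E) (c : k) (x : E) :
    B.circle a b c ((2 : k) • circleCenter a b - x) = B.circle a b c x := by
  have hreflect : (2 : k) • circleCenter a b - x - circleCenter a b = -(x - circleCenter a b) := by
    rw [two_smul]; abel
  rw [circle_eq_mul_sub_circleSize hB hchar ha, circle_eq_mul_sub_circleSize hB hchar ha, hreflect]
  simp only [map_neg, LinearMap.neg_apply, neg_neg]

theorem eq_circleCenter_of_circle_eq_zero_unique (hB : B.IsSymm) (hchar : (2 : k) ≠ 0)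
    {a : k} (ha : a ≠ 0) {b : E} {c : k} {x : E} (hx : B.circle a b c x = 0)
    (huniq : ∀ y, B.circle a b c y = 0 → y = x) :
    x = circleCenter a b := by
  have hfixed : (2 : k) • circleCenter a b - x = x :=
    huniq _ ((circle_two_smul_circleCenter_sub hB hchar ha b c x).trans hx)
  refine smul_right_injective E hchar ?_
  calc (2 : k) • x = ((2 : k) • circleCenter a b - x) + x := by rw [hfixed, two_smul]
    _ = (2 : k) • circleCenter a b := sub_add_cancel _ _

theorem circleSize_eq_zero_of_existsUnique_circle_eq_zero (hB : B.IsSymm) (hchar : (2 : k) ≠ 0)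
    {a : k} (ha : a ≠ 0) {b : E} {c : k} (h : ∃! x, B.circle a b c x = 0) :
    B.circleSize a b c = 0 := by
  obtain ⟨x, hx, huniq⟩ := h
  have hcenter := eq_circleCenter_of_circle_eq_zero_unique hB hchar ha hx huniq
  rw [circle_eq_zero_iff hB hchar ha, hcenter, sub_self, map_zero] at hx
  exact hx.symm

theorem circle_eq_zero_iff_eq_circleCenter (hB : B.IsSymm) (hchar : (2 : k) ≠ 0)
    (haniso : ∀ x : E, B x x = 0 → x = 0) {a : k} (ha : a ≠ 0) {b : E} {c : k}
    (hsize : B.circleSize a b c = 0) (x : E) :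
    B.circle a b c x = 0 ↔ x = circleCenter a b := by
  rw [circle_eq_zero_iff hB hchar ha, hsize]
  exact ⟨fun h => sub_eq_zero.mp (haniso _ h), fun h => by rw [h, sub_self, map_zero]⟩

end LinearMap.BilinForm

open LinearMap.BilinForm in
/-- The zero set of a circle `p = a(X·X)+b·X+c` (`a ≠ 0`) consists of exactly one point
iff `p` is a zero circle (size `0`), in which case the unique zero is the center
`-b/(2a)`. -/
theorem stmt_7 {k : Type*} [Field k] (hchar : (2 : k) ≠ 0)
    {E : Type*} [AddCommGroup E] [Module k E]
    (B : LinearMap.BilinForm k E) (hB : B.IsSymm)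
    (haniso : ∀ x : E, B x x = 0 → x = 0)
    (a c : k) (b : E) (ha : a ≠ 0) :
    ((∃! x : E, a * B x x + B b x + c = 0) ↔
        (B b b - 4 * a * c) / (4 * a ^ 2) = 0) ∧
    ((B b b - 4 * a * c) / (4 * a ^ 2) = 0 →
      ∀ x : E, a * B x x + B b x + c = 0 ↔ x = -((2 * a)⁻¹ • b)) := by
  have hzero_circle : B.circleSize a b c = 0 → ∀ x, B.circle a b c x = 0 ↔ x = circleCenter a b :=
    circle_eq_zero_iff_eq_circleCenter hB hchar haniso ha
  exact ⟨⟨circleSize_eq_zero_of_existsUnique_circle_eq_zero hB hchar ha,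
    fun hsize => ⟨circleCenter a b, (hzero_circle hsize _).mpr rfl,
      fun y hy => (hzero_circle hsize y).mp hy⟩⟩, hzero_circle⟩
end

section
/- Let p be a nonzero circle with leading coefficient 1, p = X·X − 2b·X + c, and let x = X·X + d·X + e be any circle with leading coefficient 1. Then ⟨p, p⟩ − 2⟨x, p⟩ = 4·x(b); consequently the orthogonal reflection R(x) = x − 2(⟨x,p⟩/⟨p,p⟩)p maps x to a cycle with zero leading coefficient (a line) if and only if the center b of p lies in the zero set of x. -/
/-- For a nonzero circle `p = X·X − 2b·X + c` and a circle `x = X·X + d·X + e`, one has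
`⟨p,p⟩ − 2⟨x,p⟩ = 4·x(b)`; consequently the orthogonal reflection
`R(x) = x − 2(⟨x,p⟩/⟨p,p⟩)p` maps `x` to a line (zero leading coefficient) iff the
center `b` of `p` lies in the zero set of `x`. -/
theorem stmt_10 {k : Type*} [Field k] (hchar : (2 : k) ≠ 0)
    {E : Type*} [AddCommGroup E] [Module k E]
    (B : LinearMap.BilinForm k E) (hB : B.IsSymm)
    (haniso : ∀ x : E, B x x = 0 → x = 0)
    (cyc : (k × E × k) → (k × E × k) → k)
    (hcyc : ∀ p q : k × E × k,
      cyc p q = B p.2.1 q.2.1 - 2 * p.1 * q.2.2 - 2 * q.1 * p.2.2)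
    (b d : E) (c e : k)
    (p x : k × E × k)
    (hp : p = ((1 : k), -((2 : k) • b), c)) (hx : x = ((1 : k), d, e))
    (hpiso : cyc p p ≠ 0) :
    cyc p p - 2 * cyc x p = 4 * (B b b + B d b + e) ∧
    ((x - (2 * (cyc x p / cyc p p)) • p).1 = 0 ↔ B b b + B d b + e = 0) := by
  have hmain : cyc p p - 2 * cyc x p = 4 * (B b b + B d b + e) := by
    rw [hcyc, hcyc, hp, hx]
    simp only [map_neg, map_smul, LinearMap.neg_apply, LinearMap.smul_apply, smul_eq_mul,
      neg_neg]
    ring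
  refine ⟨hmain, ?_⟩
  have h4 : (4 : k) ≠ 0 := by
    have : (4 : k) = 2 * 2 := by norm_num
    rw [this]; exact mul_ne_zero hchar hchar
  have hfst : (x - (2 * (cyc x p / cyc p p)) • p).1
      = 1 - 2 * (cyc x p / cyc p p) := by
    rw [hp, hx]; simp
  rw [hfst]
  constructor
  · intro h
    have ht : 2 * cyc x p = cyc p p := by
      field_simp at h
      linear_combination -h
    have h0 : 4 * (B b b + B d b + e) = 0 := by linear_combination -hmain - ht
    exact (mul_eq_zero.mp h0).resolve_left h4
  · intro h
    have h2 : 2 * cyc x p = cyc p p := by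
      linear_combination -hmain - 4*h
    rw [mul_div_assoc', h2, div_self hpiso, sub_self]
end

section
/- Let p = b·X + c be a linear cycle (b ≠ 0) and R the hyperplane reflection defined by p in the space of cycles. For any w ∈ E, R maps the zero circle q(X) = X·X − 2w·X + w·w to the zero circle centered at w' = w − 2b·(p(w)/(b·b)), i.e., R(q)(X) = X·X − 2w'·X + w'·w'. Thus the action of R on zero circles coincides with the affine reflection across the hyperplane Z(p). -/
/-!
Writing `t = 2 p(w) / (b·b)`, the pairing of the zero circle at `w` with `p` is `-2 p(w)`, so the
reflection adds `2t · p` to it. The `X·X`- and `X`-coefficients of the result are those of the zero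
circle at `w - t b`, and its constant term `w·w + 2tc` equals `(w - tb)·(w - tb)` because
`t² (b·b) = 2t p(w)`.
-/

namespace CycleReflection

variable {k : Type*} [Field k] {E : Type*} [AddCommGroup E] [Module k E]
  (B : LinearMap.BilinForm k E)

/-- A cycle `a (X·X) + b·X + c` is encoded as the triple `(a, b, c)`. -/
def cyclePairing (p q : k × E × k) : k :=
  B p.2.1 q.2.1 - 2 * p.1 * q.2.2 - 2 * q.1 * p.2.2

def reflect (p x : k × E × k) : k × E × k :=
  x - (2 * (cyclePairing B x p / cyclePairing B p p)) • p

def zeroCircle (w : E) : k × E × k := (1, -((2 : k) • w), B w w)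

def linearCycle (b : E) (c : k) : k × E × k := (0, b, c)

def reflectionCoeff (b : E) (c : k) (w : E) : k := 2 * (B b w + c) / B b b

def affineReflection (b : E) (c : k) (w : E) : E := w - reflectionCoeff B b c w • b

variable {B}

theorem cyclePairing_zeroCircle_linearCycle (hB : B.IsSymm) (b : E) (c : k) (w : E) :
    cyclePairing B (zeroCircle B w) (linearCycle b c) = -2 * (B b w + c) := by
  simp only [cyclePairing, zeroCircle, linearCycle, map_neg, map_smul, LinearMap.neg_apply,
    LinearMap.smul_apply, smul_eq_mul, hB.eq w b]
  ring

theorem cyclePairing_linearCycle_self (b : E) (c : k) :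
    cyclePairing B (linearCycle b c) (linearCycle b c) = B b b := by
  simp [cyclePairing, linearCycle]

/-- When `b·b = 0` the coefficient is the junk value `0`, so the identity holds in every case. -/
theorem reflectionCoeff_mul_self (b : E) (c : k) (w : E) :
    reflectionCoeff B b c w * (reflectionCoeff B b c w * B b b) =
      reflectionCoeff B b c w * (2 * (B b w + c)) := by
  by_cases hbb : B b b = 0
  · simp [reflectionCoeff, hbb]
  · rw [reflectionCoeff, div_mul_cancel₀ _ hbb]

theorem apply_affineReflection_self (hB : B.IsSymm) (b : E) (c : k) (w : E) :
    B (affineReflection B b c w) (affineReflection B b c w) =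
      B w w + 2 * reflectionCoeff B b c w * c := by
  simp only [affineReflection, map_sub, map_smul, LinearMap.sub_apply, LinearMap.smul_apply,
    smul_eq_mul, hB.eq w b]
  linear_combination reflectionCoeff_mul_self (B := B) b c w

theorem reflect_linearCycle_zeroCircle (hB : B.IsSymm) (b : E) (c : k) (w : E) :
    reflect B (linearCycle b c) (zeroCircle B w) = zeroCircle B (affineReflection B b c w) := by
  have hscalar : 2 * (cyclePairing B (zeroCircle B w) (linearCycle b c) /
      cyclePairing B (linearCycle b c) (linearCycle b c)) = -(2 * reflectionCoeff B b c w) := by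
    rw [cyclePairing_zeroCircle_linearCycle hB, cyclePairing_linearCycle_self, reflectionCoeff]
    ring
  rw [reflect, hscalar, zeroCircle, zeroCircle, apply_affineReflection_self hB]
  ext
  · simp [linearCycle]
  · simp only [affineReflection, linearCycle, Prod.snd_sub, Prod.fst_sub, Prod.smul_snd,
      Prod.smul_fst]
    module
  · simp only [linearCycle, Prod.snd_sub, Prod.smul_snd, smul_eq_mul]
    ring

end CycleReflection

theorem stmt_11_general {k : Type*} [Field k]
    {E : Type*} [AddCommGroup E] [Module k E]
    (B : LinearMap.BilinForm k E) (hB : B.IsSymm)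
    (cyc : (k × E × k) → (k × E × k) → k)
    (hcyc : ∀ p q : k × E × k,
      cyc p q = B p.2.1 q.2.1 - 2 * p.1 * q.2.2 - 2 * q.1 * p.2.2)
    (b : E) (c : k) (w : E)
    (p q : k × E × k)
    (hp : p = ((0 : k), b, c))
    (hq : q = ((1 : k), -((2 : k) • w), B w w))
    (w' : E) (hw' : w' = w - ((2 * (B b w + c)) / (B b b)) • b) :
    q - (2 * (cyc q p / cyc p p)) • p = ((1 : k), -((2 : k) • w'), B w' w') := by
  obtain rfl : cyc = CycleReflection.cyclePairing B := funext₂ hcyc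
  subst hp hq hw'
  exact CycleReflection.reflect_linearCycle_zeroCircle hB b c w

/-- For a linear cycle `p = b·X + c` (`b ≠ 0`), the hyperplane reflection `R` defined by
`p` maps the zero circle at `w` to the zero circle at
`w' = w − 2(p(w)/(b·b))·b`, i.e. `R` acts on zero circles as the affine reflection
across the hyperplane `Z(p)`. -/
theorem stmt_11 {k : Type*} [Field k] (hchar : (2 : k) ≠ 0)
    {E : Type*} [AddCommGroup E] [Module k E]
    (B : LinearMap.BilinForm k E) (hB : B.IsSymm)
    (haniso : ∀ x : E, B x x = 0 → x = 0)
    (cyc : (k × E × k) → (k × E × k) → k)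
    (hcyc : ∀ p q : k × E × k,
      cyc p q = B p.2.1 q.2.1 - 2 * p.1 * q.2.2 - 2 * q.1 * p.2.2)
    (b : E) (c : k) (hb : b ≠ 0) (w : E)
    (p q : k × E × k)
    (hp : p = ((0 : k), b, c))
    (hq : q = ((1 : k), -((2 : k) • w), B w w))
    (w' : E) (hw' : w' = w - ((2 * (B b w + c)) / (B b b)) • b) :
    q - (2 * (cyc q p / cyc p p)) • p = ((1 : k), -((2 : k) • w'), B w' w') :=
  stmt_11_general B hB cyc hcyc b c w p q hp hq w' hw'
end

section
/- Let p(X) = (X − b)·(X − b) − s with s ≠ 0, and R the reflection defined by p. For m ∈ E with m ≠ b, setting α = s/((m−b)·(m−b)) (well-defined since E is anisotropic) and m' = b + α(m − b), the reflection R maps the zero circle at m to (1/α) times the zero circle at m'. Hence R acts on points of E \ {b} as the inversion m ↦ m' with (m' − b)·(m − b) = s and m' collinear with b and m. -/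
/-!
For the cycles of two spheres with centres `c, c'` and squared radii `r, r'` the pairing is
`2r + 2r' - 2 (c - c')·(c - c')`, so `⟨p, p⟩ = 4s` and `⟨q, p⟩ = 2s - 2 (m - b)·(m - b)`.
Reflecting the zero circle at `m` in the sphere `(X - b)·(X - b) = s` therefore subtracts
`(1 - α⁻¹)` times that sphere, and comparing the three components shows the result is `α⁻¹`
times the zero circle at `b + α (m - b)`.
-/

namespace Cycle

variable {k E : Type*} [Field k] [AddCommGroup E] [Module k E] (B : LinearMap.BilinForm k E)

def pairing (p q : k × E × k) : k :=
  B p.2.1 q.2.1 - 2 * p.1 * q.2.2 - 2 * q.1 * p.2.2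

def reflect (p x : k × E × k) : k × E × k :=
  x - (2 * (pairing B x p / pairing B p p)) • p

/-- The cycle `X·X - 2 c·X + (c·c - r)` of the sphere `(X - c)·(X - c) = r`;
`r = 0` gives the zero circle at `c`. -/
def sphere (c : E) (r : k) : k × E × k :=
  (1, -((2 : k) • c), B c c - r)

variable {B}

theorem pairing_sphere_sphere (hB : B.IsSymm) (c c' : E) (r r' : k) :
    pairing B (sphere B c r) (sphere B c' r') = 2 * r + 2 * r' - 2 * B (c - c') (c - c') := by
  have hsym : B c' c = B c c' := hB.eq c' c
  simp only [pairing, sphere, map_neg, map_smul, map_sub, LinearMap.neg_apply,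
    LinearMap.smul_apply, LinearMap.sub_apply, smul_eq_mul, hsym]
  ring

theorem reflect_sphere_zero (hB : B.IsSymm) (h2 : (2 : k) ≠ 0) {b m : E} {s : k} (hs : s ≠ 0)
    (hd : B (m - b) (m - b) ≠ 0) :
    reflect B (sphere B b s) (sphere B m 0) =
      (s / B (m - b) (m - b))⁻¹ • sphere B (b + (s / B (m - b) (m - b)) • (m - b)) 0 := by
  set d := B (m - b) (m - b) with hd_def
  have hcoeff : 2 * (pairing B (sphere B m 0) (sphere B b s) / pairing B (sphere B b s)
      (sphere B b s)) = 1 - d / s := by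
    simp only [pairing_sphere_sphere hB, sub_self, map_zero, ← hd_def]
    rw [show 2 * s + 2 * s - 2 * 0 = 2 * (2 * s) by ring]
    field_simp
    ring
  have hsym : B m b = B b m := hB.eq m b
  have hmm : B m m = d - B b b + 2 * B b m := by
    simp only [hd_def, map_sub, LinearMap.sub_apply, hsym]; ring
  rw [reflect, hcoeff, inv_div]
  refine Prod.ext ?_ (Prod.ext ?_ ?_)
  · simp only [sphere, Prod.fst_sub, Prod.smul_fst, smul_eq_mul]
    ring
  · simp only [sphere, Prod.snd_sub, Prod.fst_sub, Prod.smul_snd, Prod.smul_fst]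
    match_scalars <;> field_simp
    ring
  · simp only [sphere, Prod.snd_sub, Prod.smul_snd, smul_eq_mul, map_add, map_smul, map_sub,
      LinearMap.add_apply, LinearMap.smul_apply, LinearMap.sub_apply, hsym, hmm]
    field_simp
    ring

end Cycle

open Cycle in
/-- For `p(X) = (X−b)·(X−b) − s` with `s ≠ 0` and `m ≠ b`, setting
`α = s/((m−b)·(m−b))` and `m' = b + α(m−b)`, the reflection `R` defined by `p` maps the
zero circle at `m` to `α⁻¹` times the zero circle at `m'`; hence `R` acts on
`E \ {b}` as the inversion `m ↦ m'` with `(m'−b)·(m−b) = s` and `m'` collinear with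
`b` and `m`. -/
theorem stmt_12 {k : Type*} [Field k] (hchar : (2 : k) ≠ 0)
    {E : Type*} [AddCommGroup E] [Module k E]
    (B : LinearMap.BilinForm k E) (hB : B.IsSymm)
    (haniso : ∀ x : E, B x x = 0 → x = 0)
    (cyc : (k × E × k) → (k × E × k) → k)
    (hcyc : ∀ p q : k × E × k,
      cyc p q = B p.2.1 q.2.1 - 2 * p.1 * q.2.2 - 2 * q.1 * p.2.2)
    (b m : E) (s : k) (hs : s ≠ 0) (hm : m ≠ b)
    (p q q' : k × E × k)
    (hp : p = ((1 : k), -((2 : k) • b), B b b - s))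
    (hq : q = ((1 : k), -((2 : k) • m), B m m))
    (α : k) (hα : α = s / B (m - b) (m - b))
    (m' : E) (hm' : m' = b + α • (m - b))
    (hq' : q' = ((1 : k), -((2 : k) • m'), B m' m')) :
    q - (2 * (cyc q p / cyc p p)) • p = α⁻¹ • q' ∧ B (m' - b) (m - b) = s := by
  have hd : B (m - b) (m - b) ≠ 0 := fun h => hm (sub_eq_zero.mp (haniso _ h))
  have hcyc' : cyc = pairing B := funext₂ hcyc
  have hp' : p = sphere B b s := hp
  have hq₀ : q = sphere B m 0 := by rw [hq, sphere, sub_zero]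
  have hq'₀ : q' = sphere B m' 0 := by rw [hq', sphere, sub_zero]
  refine ⟨?_, ?_⟩
  · rw [hcyc', hp', hq₀, hq'₀, hm', hα]
    exact reflect_sphere_zero hB hchar hs hd
  · rw [hm', add_sub_cancel_left, map_smul, LinearMap.smul_apply, smul_eq_mul, hα,
      div_mul_cancel₀ _ hd]
end

section
/- The linear map S: (x, y, z) ↦ ((z−x)/2)(X·X) − y·X + (z+x)/2 from L = k ⊕ E ⊕ k (with the Lorentz product ⟨(x,y,z),(x*,y*,z*)⟩ = y·y* + xx* − zz*) to the cycle space F (with the cycle pairing) is an isometry of bilinear spaces: it is a linear isomorphism satisfying ⟨S(u), S(v)⟩_F = ⟨u, v⟩_L for all u, v ∈ L. -/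
section LorentzCycle

variable {k E : Type*} [Field k] [AddCommGroup E] [Module k E]

def lorentzPairing (B : LinearMap.BilinForm k E) (u v : k × E × k) : k :=
  B u.2.1 v.2.1 + u.1 * v.1 - u.2.2 * v.2.2

/-- `(a, b, c)` encodes the cycle `a (X·X) + b·X + c`. -/
def cyclePairing (B : LinearMap.BilinForm k E) (p q : k × E × k) : k :=
  B p.2.1 q.2.1 - 2 * p.1 * q.2.2 - 2 * q.1 * p.2.2

def lorentzToCycle (h2 : (2 : k) ≠ 0) : (k × E × k) ≃ₗ[k] (k × E × k) where
  toFun u := ((u.2.2 - u.1) / 2, -u.2.1, (u.2.2 + u.1) / 2)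
  invFun p := (p.2.2 - p.1, -p.2.1, p.2.2 + p.1)
  map_add' u v := by
    ext <;> simp only [Prod.fst_add, Prod.snd_add, neg_add] <;> ring
  map_smul' c u := by
    ext <;> simp only [Prod.smul_fst, Prod.smul_snd, smul_eq_mul, smul_neg, RingHom.id_apply] <;>
      ring
  left_inv u := by
    ext <;> simp only [neg_neg] <;> field_simp <;> ring
  right_inv p := by
    ext <;> simp only [neg_neg] <;> field_simp <;> ring

theorem lorentzToCycle_apply (h2 : (2 : k) ≠ 0) (u : k × E × k) :
    lorentzToCycle h2 u = ((u.2.2 - u.1) / 2, -u.2.1, (u.2.2 + u.1) / 2) :=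
  rfl

theorem cyclePairing_lorentzToCycle (h2 : (2 : k) ≠ 0) (B : LinearMap.BilinForm k E)
    (u v : k × E × k) :
    cyclePairing B (lorentzToCycle h2 u) (lorentzToCycle h2 v) = lorentzPairing B u v := by
  simp only [cyclePairing, lorentzPairing, lorentzToCycle_apply, map_neg, LinearMap.neg_apply,
    neg_neg]
  field_simp
  ring

end LorentzCycle

theorem stmt_17_general {k : Type*} [Field k] (hchar : (2 : k) ≠ 0)
    {E : Type*} [AddCommGroup E] [Module k E]
    (B : LinearMap.BilinForm k E)
    (cyc lor : (k × E × k) → (k × E × k) → k)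
    (hcyc : ∀ p q : k × E × k,
      cyc p q = B p.2.1 q.2.1 - 2 * p.1 * q.2.2 - 2 * q.1 * p.2.2)
    (hlor : ∀ u v : k × E × k,
      lor u v = B u.2.1 v.2.1 + u.1 * v.1 - u.2.2 * v.2.2) :
    ∃ S : (k × E × k) ≃ₗ[k] (k × E × k),
      (∀ u : k × E × k, S u = ((u.2.2 - u.1) / 2, -u.2.1, (u.2.2 + u.1) / 2)) ∧
      (∀ u v : k × E × k, cyc (S u) (S v) = lor u v) := by
  refine ⟨lorentzToCycle hchar, lorentzToCycle_apply hchar, fun u v => ?_⟩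
  rw [hcyc, hlor]
  exact cyclePairing_lorentzToCycle hchar B u v

/-- The map `S : (x,y,z) ↦ ((z−x)/2)(X·X) − y·X + (z+x)/2` is a linear isomorphism from
`L = k ⊕ E ⊕ k` with the Lorentz product onto the cycle space `F` with the cycle
pairing, and it is an isometry of bilinear spaces. -/
theorem stmt_17 {k : Type*} [Field k] (hchar : (2 : k) ≠ 0)
    {E : Type*} [AddCommGroup E] [Module k E]
    (B : LinearMap.BilinForm k E) (hB : B.IsSymm)
    (haniso : ∀ x : E, B x x = 0 → x = 0)
    (cyc lor : (k × E × k) → (k × E × k) → k)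
    (hcyc : ∀ p q : k × E × k,
      cyc p q = B p.2.1 q.2.1 - 2 * p.1 * q.2.2 - 2 * q.1 * p.2.2)
    (hlor : ∀ u v : k × E × k,
      lor u v = B u.2.1 v.2.1 + u.1 * v.1 - u.2.2 * v.2.2) :
    ∃ S : (k × E × k) ≃ₗ[k] (k × E × k),
      (∀ u : k × E × k, S u = ((u.2.2 - u.1) / 2, -u.2.1, (u.2.2 + u.1) / 2)) ∧
      (∀ u v : k × E × k, cyc (S u) (S v) = lor u v) :=
  stmt_17_general hchar B cyc lor hcyc hlor
end
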